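/- Every weakly useful infinite sequence is super deep. -/

import Mathlib

open Filter Topology

/-- `pref α n` is the length-`n` prefix of the infinite sequence `α`. -/
def pref (α : ℕ → Bool) (n : ℕ) : List Bool := List.ofFn (fun i : Fin n => α i)

/-- Every weakly useful sequence is super deep: if there is a recursive time
bound `s` such that the set of decidable sequences Turing reducible to `α`
within time `s` has positive measure in the set of decidable sequences, then
for every recursive `t` and every significance function `g = o(n)`,
`α ∈ D^t_g`, i.e. `K^t(α_n) - K(α_n) ≥ g(n)` for all but finitely many `n`. -/
theorem stmt13
    (K : List Bool → ℕ) (Kt : (ℕ → ℕ) → List Bool → ℕ)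
    (Recursive : (ℕ → ℕ) → Prop)
    (DecidableSeq : (ℕ → Bool) → Prop)
    -- `RedIn s β α` : β is Turing reducible to α in time s
    (RedIn : (ℕ → ℕ) → (ℕ → Bool) → (ℕ → Bool) → Prop)
    -- `meas` : measure within the set of decidable (recursive) sequences
    (meas : Set (ℕ → Bool) → ℝ)
    -- Juedes–Lathrop–Lutz Lemma 5.5 (abstract form): from a reduction in time s,
    -- depth of β (w.r.t. suitable t̂, ĝ) transfers to depth of α (w.r.t. t, g);
    -- moreover ĝ is eventually below γn for some 0 < γ < 1 whenever g = o(n).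
    (h55 : ∀ s : ℕ → ℕ, Recursive s → ∀ t g : ℕ → ℕ, Recursive t →
      Tendsto (fun n => (g n : ℝ) / n) atTop (nhds 0) →
      ∃ (that : ℕ → ℕ) (ghat : ℕ → ℕ) (γ : ℝ), Recursive that ∧ 0 < γ ∧ γ < 1 ∧
        (∀ᶠ n in atTop, (ghat n : ℝ) ≤ γ * n) ∧
        (∀ α β : ℕ → Bool, RedIn s β α →
          (∀ᶠ n in atTop, (ghat n : ℤ) ≤ (Kt that (pref β n) : ℤ) - (K (pref β n) : ℤ)) →
          (∀ᶠ n in atTop, (g n : ℤ) ≤ (Kt t (pref α n) : ℤ) - (K (pref α n) : ℤ))))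
    -- Corollary 5.9: for every recursive t and 0 < γ < 1, D^t_{γn} has measure 1
    (h59 : ∀ t : ℕ → ℕ, Recursive t → ∀ γ : ℝ, 0 < γ → γ < 1 →
      meas {β | DecidableSeq β ∧
        ∀ᶠ n in atTop, γ * n ≤ (Kt t (pref β n) : ℝ) - (K (pref β n) : ℝ)} = 1)
    -- a measure-1 set meets every set of positive measure
    (hmeas : ∀ A B : Set (ℕ → Bool), meas A = 1 → 0 < meas B → (A ∩ B).Nonempty)
    (α : ℕ → Bool)
    -- α is weakly useful
    (hwu : ∃ s : ℕ → ℕ, Recursive s ∧ 0 < meas {β | DecidableSeq β ∧ RedIn s β α}) :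
    -- α is super deep (characterization via computational depth)
    ∀ t : ℕ → ℕ, Recursive t → ∀ g : ℕ → ℕ,
      Tendsto (fun n => (g n : ℝ) / n) atTop (nhds 0) →
      ∀ᶠ n in atTop, (g n : ℤ) ≤ (Kt t (pref α n) : ℤ) - (K (pref α n) : ℤ) := by
  intro t ht g hg
  obtain ⟨s, hs, hreducible_pos⟩ := hwu
  obtain ⟨that, ghat, γ, hthat, hγ0, hγ1, hghat_le, htransfer⟩ := h55 s hs t g ht hg
  obtain ⟨β, ⟨-, hβ_deep⟩, -, hβα⟩ := hmeas _ _ (h59 that hthat γ hγ0 hγ1) hreducible_pos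
  refine htransfer α β hβα ?_
  filter_upwards [hβ_deep, hghat_le] with n hdeep hghat
  exact_mod_cast hghat.trans hdeep
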